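/- Let s>0 and λ>0, and let μ be the Gamma distribution on (0,∞) with density (λ^{2s}/Γ(2s)) y^{2s-1} e^{-λ y}. Define, for f:(0,∞)→ℝ polynomial, (𝓛 f)(y) = ∫_0^{y}(dα/α)(1-α/y)^{2s-1}[f(y-α)-f(y)] + ∫_0^∞ (dα/α) e^{-λα}[f(y+α)-f(y)]. Then for all polynomials f,g: ∫ (𝓛f)(y) g(y) μ(dy) = ∫ f(y) (𝓛g)(y) μ(dy). -/

import Mathlib

open MeasureTheory Real

noncomputable section

namespace HeatModel

/-- Density of the Gamma(2s, lam) distribution. -/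
def gammaDensity (s lam : ℝ) (y : ℝ) : ℝ :=
  lam ^ (2 * s) / Real.Gamma (2 * s) * y ^ (2 * s - 1) * Real.exp (-(lam * y))

/-- The boundary reservoir generator of the integrable heat conduction model. -/
def reservoirGen (s lam : ℝ) (f : ℝ → ℝ) (y : ℝ) : ℝ :=
  (∫ a in Set.Ioo 0 y, (1 - a / y) ^ (2 * s - 1) / a * (f (y - a) - f y))
    + ∫ a in Set.Ioi (0 : ℝ), Real.exp (-(lam * a)) / a * (f (y + a) - f y)

open Set Finset Polynomial
open scoped Nat

/-!
For a monomial `f = X ^ k` both jump integrals are elementary: the downward one is a sum of Beta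
integrals `∫₀¹ (1 - u) ^ (2s - 1 + j) du = 1 / (2s + j)`, the upward one a sum of Gamma integrals
`∫₀^∞ a ^ j e^{-λa} da = j! / λ^{j+1}`. Hence `𝓛` maps polynomials to polynomials, and since the
Gamma(2s, λ) moments are the rising factorials `(2s)_r / λ^r`, the claim becomes the symmetry of
the bilinear form `(p, q) ↦ E[(𝓛 p) q]`, which needs checking only on monomials. There
`λ^{k+l} E[(𝓛 X^k) X^l] = -∑_{a,b ≥ 1} C(k,a) C(l,b) (a+b-1)! (2s)_{k+l-a-b}`, which is
symmetric in `k, l`. This closed form follows from Chu–Vandermonde for rising factorials and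
the formula `∑_{a ≥ 1} C(k,a) (a-1)! (x)_{k-a} = (x)_k ∑_{j<k} 1/(x+j)` for the logarithmic
derivative of `(x)_k`.
-/

section Pochhammer

theorem descPochhammer_int_smeval {R : Type*} [CommRing R] (r : R) (n : ℕ) :
    (descPochhammer ℤ n).smeval r = (descPochhammer R n).eval r := by
  rw [← aeval_eq_smeval, aeval_def, eval₂_eq_eval_map, descPochhammer_map]

theorem ascPochhammer_eval_add {R : Type*} [CommRing R] (r s : R) (n : ℕ) :
    (ascPochhammer R n).eval (r + s) = ∑ i ∈ range (n + 1),
      n.choose i * ((ascPochhammer R i).eval r * (ascPochhammer R (n - i)).eval s) := by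
  rw [← neg_neg (r + s), neg_add, ascPochhammer_eval_neg_eq_descPochhammer,
    ← descPochhammer_int_smeval, Ring.descPochhammer_smeval_add n (Commute.all (-r) (-s)),
    Nat.sum_antidiagonal_eq_sum_range_succ_mk, mul_sum]
  refine sum_congr rfl fun i hi => ?_
  have hsign : (-1 : R) ^ n = (-1) ^ i * (-1) ^ (n - i) := by
    rw [← pow_add, Nat.add_sub_cancel' (Nat.lt_succ_iff.mp (mem_range.mp hi))]
  rw [← neg_neg r, ← neg_neg s, ascPochhammer_eval_neg_eq_descPochhammer,
    ascPochhammer_eval_neg_eq_descPochhammer, neg_neg, neg_neg, descPochhammer_int_smeval,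
    descPochhammer_int_smeval, hsign]
  ring

theorem ascPochhammer_add_eval {R : Type*} [CommSemiring R] (r : R) (n m : ℕ) :
    (ascPochhammer R (n + m)).eval r
      = (ascPochhammer R n).eval r * (ascPochhammer R m).eval (r + n) := by
  rw [← ascPochhammer_mul, eval_mul, eval_comp, eval_add, eval_X, eval_natCast]

variable {K : Type*} [Field K] {x : K}

theorem sum_choose_mul_factorial_mul_ascPochhammer_eval (hx : ∀ j : ℕ, x + j ≠ 0) (k : ℕ) :
    ∑ a ∈ range k, (k.choose (a + 1) : K) * a ! * (ascPochhammer K (k - (a + 1))).eval x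
      = (ascPochhammer K k).eval x * ∑ j ∈ range k, (x + j)⁻¹ := by
  induction k with
  | zero => simp
  | succ k ih =>
    have hlower : ∀ a ∈ range k,
        (k.choose (a + 1) : K) * (a ! * (ascPochhammer K (k - a)).eval x)
          = (x + k) * (k.choose (a + 1) * a ! * (ascPochhammer K (k - (a + 1))).eval x)
            - k.choose (a + 1) * ((a + 1)! * (ascPochhammer K (k - (a + 1))).eval x) := by
      intro a ha
      have hka : k - a = k - (a + 1) + 1 := by have := mem_range.mp ha; omega
      rw [hka, ascPochhammer_succ_eval, Nat.cast_sub (mem_range.mp ha), Nat.factorial_succ]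
      push_cast
      ring
    simp only [Nat.choose_succ_succ', Nat.cast_add, add_mul, sum_add_distrib, mul_assoc]
    rw [sum_range_succ', sum_range_succ _ k, Nat.choose_succ_self, Nat.cast_zero, zero_mul,
      add_zero]
    simp only [Nat.add_sub_add_right, zero_add, Nat.add_sub_cancel, Nat.choose_zero_right,
      Nat.factorial_zero, Nat.cast_one, one_mul]
    rw [sum_congr rfl hlower, sum_sub_distrib, ← mul_sum, ih, sum_range_succ,
      ascPochhammer_succ_eval]
    field_simp [hx k]
    ring

/-- `λ ^ (k + l)` times the Gamma(x, λ)-expectation of `(𝓛 X^k) X^l`. -/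
def monomialPairing (x : K) (k l : ℕ) : K :=
  ∑ a ∈ range k, (k.choose (a + 1) : K) * a ! * (ascPochhammer K (k + l - (a + 1))).eval x
    - (ascPochhammer K (k + l)).eval x * ∑ j ∈ range k, (x + j)⁻¹

theorem monomialPairing_eq (hx : ∀ j : ℕ, x + j ≠ 0) (k l : ℕ) :
    monomialPairing x k l = -∑ a ∈ range k, ∑ b ∈ range l, (k.choose (a + 1) : K)
      * l.choose (b + 1) * (a + b + 1)! * (ascPochhammer K (k + l - (a + b + 2))).eval x := by
  have hsplit : ∀ a ∈ range k,
      (k.choose (a + 1) : K) * a ! * (ascPochhammer K (k - (a + 1))).eval x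
        * (ascPochhammer K l).eval (x + k)
      = ∑ b ∈ range (l + 1), (k.choose (a + 1) : K) * l.choose b * (a + b)!
          * (ascPochhammer K (k + l - (a + b + 1))).eval x := by
    intro a ha
    have hak : a + 1 ≤ k := mem_range.mp ha
    have hshift : x + k = ((a + 1 : ℕ) : K) + (x + (k - (a + 1) : ℕ)) := by
      push_cast [Nat.cast_sub hak]
      ring
    rw [hshift, ascPochhammer_eval_add, mul_sum]
    refine sum_congr rfl fun b hb => ?_
    have hidx : k + l - (a + b + 1) = (k - (a + 1)) + (l - b) := by
      have := mem_range.mp hb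
      omega
    rw [hidx, ascPochhammer_add_eval, ascPochhammer_nat_eq_natCast_ascFactorial,
      ← Nat.factorial_mul_ascFactorial]
    push_cast
    ring
  have hexpand : (ascPochhammer K (k + l)).eval x * ∑ j ∈ range k, (x + j)⁻¹
      = ∑ a ∈ range k, ∑ b ∈ range (l + 1), (k.choose (a + 1) : K) * l.choose b * (a + b)!
          * (ascPochhammer K (k + l - (a + b + 1))).eval x := by
    rw [ascPochhammer_add_eval, mul_right_comm,
      ← sum_choose_mul_factorial_mul_ascPochhammer_eval hx, sum_mul]
    exact sum_congr rfl hsplit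
  rw [monomialPairing, hexpand, ← sum_neg_distrib, ← sum_sub_distrib]
  refine sum_congr rfl fun a _ => ?_
  rw [sum_range_succ', add_zero, Nat.choose_zero_right, Nat.cast_one, mul_one,
    sub_add_cancel_right]
  refine congrArg _ (sum_congr rfl fun b _ => ?_)
  rw [← add_assoc, show a + b + 1 + 1 = a + b + 2 by ring]

theorem monomialPairing_comm (hx : ∀ j : ℕ, x + j ≠ 0) (k l : ℕ) :
    monomialPairing x k l = monomialPairing x l k := by
  rw [monomialPairing_eq hx, monomialPairing_eq hx, sum_comm]
  refine congrArg _ (sum_congr rfl fun b _ => sum_congr rfl fun a _ => ?_)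
  rw [Nat.add_comm l k, Nat.add_comm b a]
  ring

end Pochhammer

section Integrals

theorem Gamma_add_nat {x : ℝ} (hx : ∀ n : ℕ, x + n ≠ 0) (n : ℕ) :
    Gamma (x + n) = (ascPochhammer ℝ n).eval x * Gamma x := by
  induction n with
  | zero => simp
  | succ n ih =>
    rw [Nat.cast_succ, ← add_assoc, Gamma_add_one (hx n), ih, ascPochhammer_succ_eval]
    ring

theorem integral_one_sub_div_rpow {y d : ℝ} (hy : 0 < y) (hd : -1 < d) :
    ∫ a in Ioo 0 y, (1 - a / y) ^ d = y / (d + 1) := by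
  rw [← integral_Ioc_eq_integral_Ioo, ← intervalIntegral.integral_of_le hy.le,
    intervalIntegral.integral_comp_sub_div (fun t => t ^ d) hy.ne', div_self hy.ne',
    zero_div, sub_self, sub_zero, integral_rpow (Or.inl hd), one_rpow,
    zero_rpow (by linarith), smul_eq_mul]
  ring

theorem integrableOn_one_sub_div_rpow {y d : ℝ} (hy : 0 < y) (hd : -1 < d) :
    IntegrableOn (fun a => (1 - a / y) ^ d) (Ioo 0 y) :=
  .of_integral_ne_zero <| by
    rw [integral_one_sub_div_rpow hy hd]
    exact div_ne_zero hy.ne' (by linarith)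

theorem integral_pow_mul_exp_neg_mul {lam : ℝ} (hlam : 0 < lam) (j : ℕ) :
    ∫ a in Ioi 0, a ^ j * exp (-(lam * a)) = j ! / lam ^ (j + 1) := by
  have h := integral_rpow_mul_exp_neg_mul_Ioi (a := j + 1) (by positivity) hlam
  rw [add_sub_cancel_right, Gamma_nat_eq_factorial, ← Nat.cast_add_one, rpow_natCast,
    one_div_pow, one_div_mul_eq_div] at h
  rw [← h]
  exact setIntegral_congr_fun measurableSet_Ioi fun a _ => by rw [rpow_natCast]

theorem integrableOn_pow_mul_exp_neg_mul {lam : ℝ} (hlam : 0 < lam) (j : ℕ) :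
    IntegrableOn (fun a => a ^ j * exp (-(lam * a))) (Ioi 0) :=
  .of_integral_ne_zero <| by
    rw [integral_pow_mul_exp_neg_mul hlam]
    positivity

theorem integral_gammaDensity_mul_pow {s lam : ℝ} (hs : 0 < s) (hlam : 0 < lam) (r : ℕ) :
    ∫ y in Ioi 0, gammaDensity s lam y * y ^ r
      = (ascPochhammer ℝ r).eval (2 * s) / lam ^ r := by
  have h := integral_rpow_mul_exp_neg_mul_Ioi (a := 2 * s + r) (by positivity) hlam
  rw [Gamma_add_nat (fun n => by positivity), rpow_add (by positivity), rpow_natCast,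
    div_rpow zero_le_one hlam.le, one_rpow, one_div_pow] at h
  have hΓ : Gamma (2 * s) ≠ 0 := (Gamma_pos_of_pos (by positivity)).ne'
  have hlam2s : lam ^ (2 * s) ≠ 0 := (rpow_pos_of_pos hlam _).ne'
  calc ∫ y in Ioi 0, gammaDensity s lam y * y ^ r
      = lam ^ (2 * s) / Gamma (2 * s)
          * ∫ y in Ioi 0, y ^ (2 * s + r - 1) * exp (-(lam * y)) := by
        rw [← integral_const_mul]
        refine setIntegral_congr_fun measurableSet_Ioi fun y hy => ?_
        rw [gammaDensity, show 2 * s + r - 1 = (2 * s - 1) + r by ring, rpow_add hy,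
          rpow_natCast]
        ring
    _ = _ := by
        rw [h]
        field_simp

theorem integrableOn_gammaDensity_mul_pow {s lam : ℝ} (hs : 0 < s) (hlam : 0 < lam) (r : ℕ) :
    IntegrableOn (fun y => gammaDensity s lam y * y ^ r) (Ioi 0) :=
  .of_integral_ne_zero <| by
    rw [integral_gammaDensity_mul_pow hs hlam]
    exact div_ne_zero (ascPochhammer_pos r _ (by positivity)).ne' (by positivity)

end Integrals

section DownwardJumps

theorem one_sub_div_rpow_div_mul_pow_sub_pow {c y a : ℝ} (ha : a ∈ Ioo 0 y) (k : ℕ) :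
    (1 - a / y) ^ c / a * ((y - a) ^ k - y ^ k)
      = -∑ j ∈ range k, y ^ (k - 1 - j) * y ^ j * (1 - a / y) ^ (c + j) := by
  obtain ⟨ha0, hay⟩ := ha
  have hy : 0 < y := ha0.trans hay
  have hpos : 0 < 1 - a / y := by
    rw [sub_pos, div_lt_one hy]
    exact hay
  rw [← geom_sum₂_mul, show y - a - y = -a by ring, sum_mul, mul_sum, ← sum_neg_distrib]
  refine sum_congr rfl fun j _ => ?_
  have hya : y - a = y * (1 - a / y) := by field_simp
  rw [rpow_add hpos, rpow_natCast, hya, mul_pow]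
  field_simp

variable {c y : ℝ} (hc : -1 < c) (hy : 0 < y)
include hc hy

theorem integral_one_sub_div_rpow_div_mul_pow_sub_pow (k : ℕ) :
    ∫ a in Ioo 0 y, (1 - a / y) ^ c / a * ((y - a) ^ k - y ^ k)
      = -(∑ j ∈ range k, (c + 1 + j)⁻¹) * y ^ k := by
  have hcj : ∀ j : ℕ, -1 < c + j := fun j => by have := j.cast_nonneg (α := ℝ); linarith
  rw [setIntegral_congr_fun measurableSet_Ioo fun a ha =>
      one_sub_div_rpow_div_mul_pow_sub_pow ha k,
    integral_neg, integral_finsetSum _ fun j _ =>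
      (integrableOn_one_sub_div_rpow hy (hcj j)).const_mul _,
    neg_mul, sum_mul]
  refine congrArg _ (sum_congr rfl fun j hj => ?_)
  have hk : k - 1 - j + j + 1 = k := by have := mem_range.mp hj; omega
  rw [integral_const_mul, integral_one_sub_div_rpow hy (hcj j), mul_div, ← pow_add, ← pow_succ,
    hk, add_right_comm]
  ring

theorem integrableOn_one_sub_div_rpow_div_mul_pow_sub_pow (k : ℕ) :
    IntegrableOn (fun a => (1 - a / y) ^ c / a * ((y - a) ^ k - y ^ k)) (Ioo 0 y) := by
  have hcj : ∀ j : ℕ, -1 < c + j := fun j => by have := j.cast_nonneg (α := ℝ); linarith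
  have h : IntegrableOn
      (fun a => -∑ j ∈ range k, y ^ (k - 1 - j) * y ^ j * (1 - a / y) ^ (c + j)) (Ioo 0 y) :=
    (integrable_finsetSum _ fun j _ => (integrableOn_one_sub_div_rpow hy (hcj j)).const_mul _).neg
  exact h.congr_fun (fun a ha => (one_sub_div_rpow_div_mul_pow_sub_pow ha k).symm)
    measurableSet_Ioo

end DownwardJumps

section UpwardJumps

theorem exp_neg_mul_div_mul_add_pow_sub_pow {lam y a : ℝ} (ha : a ≠ 0) (k : ℕ) :
    exp (-(lam * a)) / a * ((y + a) ^ k - y ^ k)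
      = ∑ j ∈ range k, k.choose (j + 1) * y ^ (k - 1 - j) * (a ^ j * exp (-(lam * a))) := by
  rw [add_comm y a, add_pow, sum_range_succ', pow_zero, one_mul, Nat.sub_zero,
    Nat.choose_zero_right, Nat.cast_one, mul_one, add_sub_cancel_right, mul_sum]
  refine sum_congr rfl fun j _ => ?_
  rw [Nat.sub_sub, add_comm 1 j, pow_succ]
  field_simp

variable {lam : ℝ} (hlam : 0 < lam) (y : ℝ)
include hlam

theorem integral_exp_neg_mul_div_mul_add_pow_sub_pow (k : ℕ) :
    ∫ a in Ioi 0, exp (-(lam * a)) / a * ((y + a) ^ k - y ^ k)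
      = ∑ j ∈ range k, k.choose (j + 1) * y ^ (k - 1 - j) * (j ! / lam ^ (j + 1)) := by
  rw [setIntegral_congr_fun measurableSet_Ioi fun a ha =>
      exp_neg_mul_div_mul_add_pow_sub_pow (ne_of_gt ha) k,
    integral_finsetSum _ fun j _ => (integrableOn_pow_mul_exp_neg_mul hlam j).const_mul _]
  simp only [integral_const_mul, integral_pow_mul_exp_neg_mul hlam]

theorem integrableOn_exp_neg_mul_div_mul_add_pow_sub_pow (k : ℕ) :
    IntegrableOn (fun a => exp (-(lam * a)) / a * ((y + a) ^ k - y ^ k)) (Ioi 0) :=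
  IntegrableOn.congr_fun
    (integrable_finsetSum _ fun j _ => (integrableOn_pow_mul_exp_neg_mul hlam j).const_mul _)
    (fun _ ha => (exp_neg_mul_div_mul_add_pow_sub_pow (ne_of_gt ha) k).symm) measurableSet_Ioi

end UpwardJumps

def reservoirGenPow (s lam : ℝ) (k : ℕ) : ℝ[X] :=
  ∑ j ∈ range k, C (k.choose (j + 1) * j ! / lam ^ (j + 1)) * X ^ (k - 1 - j)
    - C (∑ j ∈ range k, (2 * s + j)⁻¹) * X ^ k

def reservoirGenPoly (s lam : ℝ) : ℝ[X] →ₗ[ℝ] ℝ[X] :=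
  lsum fun k => LinearMap.toSpanSingleton ℝ ℝ[X] (reservoirGenPow s lam k)

def gammaMoment (s lam : ℝ) : ℝ[X] →ₗ[ℝ] ℝ :=
  lsum fun r => LinearMap.toSpanSingleton ℝ ℝ ((ascPochhammer ℝ r).eval (2 * s) / lam ^ r)

theorem reservoirGenPoly_X_pow (s lam : ℝ) (k : ℕ) :
    reservoirGenPoly s lam (X ^ k) = reservoirGenPow s lam k := by
  simp [reservoirGenPoly, X_pow_eq_monomial]

theorem gammaMoment_C_mul_X_pow (s lam c : ℝ) (r : ℕ) :
    gammaMoment s lam (C c * X ^ r) = c * ((ascPochhammer ℝ r).eval (2 * s) / lam ^ r) := by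
  simp [gammaMoment, C_mul_X_pow_eq_monomial]

theorem mul_eval_sub_eval_eq_sum {R : Type*} [CommRing R] (w u v : R) (p : R[X]) :
    w * (eval u p - eval v p)
      = ∑ k ∈ range (p.natDegree + 1), p.coeff k * (w * (u ^ k - v ^ k)) := by
  simp only [eval_eq_sum_range, ← sum_sub_distrib, mul_sum]
  exact sum_congr rfl fun k _ => by ring

section Generator

variable {s lam y : ℝ} (hs : 0 < s) (hlam : 0 < lam) (hy : 0 < y)
include hs hlam hy

theorem reservoirGen_pow (k : ℕ) :
    reservoirGen s lam (· ^ k) y = eval y (reservoirGenPow s lam k) := by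
  rw [reservoirGen, integral_one_sub_div_rpow_div_mul_pow_sub_pow (by linarith) hy,
    integral_exp_neg_mul_div_mul_add_pow_sub_pow hlam, reservoirGenPow]
  simp only [eval_sub, eval_finsetSum, eval_mul, eval_C, eval_pow, eval_X, sub_add_cancel]
  rw [neg_mul, neg_add_eq_sub]
  refine congrArg₂ _ (sum_congr rfl fun j _ => ?_) rfl
  ring

theorem reservoirGen_eval_eq_sum (p : ℝ[X]) :
    reservoirGen s lam (fun z => eval z p) y
      = ∑ k ∈ range (p.natDegree + 1), p.coeff k * reservoirGen s lam (· ^ k) y := by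
  simp only [reservoirGen, mul_eval_sub_eval_eq_sum]
  rw [integral_finsetSum _ fun k _ =>
      (integrableOn_one_sub_div_rpow_div_mul_pow_sub_pow (by linarith) hy k).const_mul _,
    integral_finsetSum _ fun k _ =>
      (integrableOn_exp_neg_mul_div_mul_add_pow_sub_pow hlam y k).const_mul _,
    ← sum_add_distrib]
  simp only [integral_const_mul, mul_add]

theorem reservoirGen_eq_eval_reservoirGenPoly (p : ℝ[X]) :
    reservoirGen s lam (fun z => eval z p) y = eval y (reservoirGenPoly s lam p) := by
  rw [reservoirGen_eval_eq_sum hs hlam hy, reservoirGenPoly, lsum_apply,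
    sum_over_range _ fun _ => map_zero _, eval_finsetSum]
  simp only [reservoirGen_pow hs hlam hy, LinearMap.toSpanSingleton_apply, eval_smul,
    smul_eq_mul]

end Generator

theorem integral_gammaDensity_mul_eval {s lam : ℝ} (hs : 0 < s) (hlam : 0 < lam) (w : ℝ[X]) :
    ∫ y in Ioi 0, gammaDensity s lam y * eval y w = gammaMoment s lam w := by
  simp only [eval_eq_sum_range, mul_sum, mul_left_comm (gammaDensity s lam _)]
  rw [integral_finsetSum _ fun r _ => (integrableOn_gammaDensity_mul_pow hs hlam r).const_mul _,
    gammaMoment, lsum_apply, sum_over_range _ fun _ => map_zero _]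
  simp only [integral_const_mul, integral_gammaDensity_mul_pow hs hlam,
    LinearMap.toSpanSingleton_apply, smul_eq_mul]

theorem gammaMoment_reservoirGenPow_mul_X_pow (s lam : ℝ) (k l : ℕ) :
    gammaMoment s lam (reservoirGenPow s lam k * X ^ l)
      = monomialPairing (2 * s) k l / lam ^ (k + l) := by
  simp only [reservoirGenPow, sub_mul, sum_mul, mul_assoc, ← pow_add, map_sub, map_sum,
    gammaMoment_C_mul_X_pow, monomialPairing, sub_div, sum_div]
  refine congrArg₂ _ (sum_congr rfl fun j hj => ?_) (by rw [← sum_mul]; ring)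
  have hj : j + 1 ≤ k := mem_range.mp hj
  rw [show k - 1 - j + l = k + l - (j + 1) by omega, div_mul_div_comm, ← pow_add,
    Nat.add_sub_cancel' (by omega : j + 1 ≤ k + l)]
  ring

theorem gammaMoment_reservoirGenPoly_mul_comm {s : ℝ} (hs : 0 < s) (lam : ℝ) (p q : ℝ[X]) :
    gammaMoment s lam (reservoirGenPoly s lam p * q)
      = gammaMoment s lam (p * reservoirGenPoly s lam q) := by
  let B := (LinearMap.mul ℝ ℝ[X] ∘ₗ reservoirGenPoly s lam).compr₂ (gammaMoment s lam)
  have hB : B.flip = B := by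
    ext k l
    simp only [B, LinearMap.comp_apply, LinearMap.flip_apply, LinearMap.compr₂_apply,
      LinearMap.mul_apply', ← X_pow_eq_monomial, reservoirGenPoly_X_pow,
      gammaMoment_reservoirGenPow_mul_X_pow, add_comm,
      monomialPairing_comm (x := 2 * s) (fun j => by positivity)]
  rw [mul_comm p]
  exact LinearMap.congr_fun₂ hB q p

/-- Reversibility of the boundary reservoir generator with respect to the Gamma(2s, lam)
distribution, on polynomial functions. -/
theorem reservoir_reversibility (s lam : ℝ) (hs : 0 < s) (hlam : 0 < lam)
    (p q : Polynomial ℝ) :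
    (∫ y in Set.Ioi (0 : ℝ),
        gammaDensity s lam y *
          (reservoirGen s lam (fun z => Polynomial.eval z p) y * Polynomial.eval y q))
    = ∫ y in Set.Ioi (0 : ℝ),
        gammaDensity s lam y *
          (Polynomial.eval y p * reservoirGen s lam (fun z => Polynomial.eval z q) y) := by
  have hgen : ∀ r : ℝ[X], ∀ y ∈ Ioi (0 : ℝ),
      reservoirGen s lam (fun z => eval z r) y = eval y (reservoirGenPoly s lam r) :=
    fun r y hy => reservoirGen_eq_eval_reservoirGenPoly hs hlam hy r
  calc _ = ∫ y in Ioi 0, gammaDensity s lam y * eval y (reservoirGenPoly s lam p * q) :=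
        setIntegral_congr_fun measurableSet_Ioi fun y hy => by rw [hgen p y hy, eval_mul]
    _ = ∫ y in Ioi 0, gammaDensity s lam y * eval y (p * reservoirGenPoly s lam q) := by
        rw [integral_gammaDensity_mul_eval hs hlam, integral_gammaDensity_mul_eval hs hlam,
          gammaMoment_reservoirGenPoly_mul_comm hs]
    _ = _ := setIntegral_congr_fun measurableSet_Ioi fun y hy => by rw [hgen q y hy, eval_mul]

end HeatModel
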